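/- Let 0 ≤ β ≤ α ≤ 1 and s ∈ ℝ. Define the weight w^s on I by w_i^s = 2^{js} for i = (j,m,ℓ) ∈ I₀ and w₀^s = 1. Then w^s is Q^(α,β)-moderate with constant 2^{3|s|}: for all i, i' ∈ I with Q_i ∩ Q_{i'} ≠ ∅ one has w_i^s ≤ 2^{3|s|}·w_{i'}^s. -/

import Mathlib

noncomputable section

open Real Set MeasureTheory Pointwise
open scoped ENNReal

/-- `ℝ²` with the Euclidean norm. -/
abbrev R2 : Type := EuclideanSpace ℝ (Fin 2)

/-- The vector `(a, b) ∈ ℝ²`. -/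
def vec2 (a b : ℝ) : R2 := (EuclideanSpace.equiv (Fin 2) ℝ).symm ![a, b]

/-- Action of a `2×2` matrix on `ℝ²`. -/
def mulV (M : Matrix (Fin 2) (Fin 2) ℝ) (x : R2) : R2 :=
  (EuclideanSpace.equiv (Fin 2) ℝ).symm (M.mulVec ((EuclideanSpace.equiv (Fin 2) ℝ) x))

/-- Rotation matrix through the angle `θ`. -/
def Rmat (θ : ℝ) : Matrix (Fin 2) (Fin 2) ℝ :=
  !![Real.cos θ, -Real.sin θ; Real.sin θ, Real.cos θ]

/-- The diagonal matrix `A_j = diag(2^{αj}, 2^{βj})`. -/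
def Amat (α β : ℝ) (j : ℕ) : Matrix (Fin 2) (Fin 2) ℝ :=
  !![(2:ℝ) ^ (α * (j:ℝ)), 0; 0, (2:ℝ) ^ (β * (j:ℝ))]

/-- The angle `Θ_{j,ℓ} = 2ℓ·(π/N)·2^{(β − 1)j}`, with `N = 10`. -/
def Theta (β : ℝ) (j ℓ : ℕ) : ℝ :=
  2 * (ℓ:ℝ) * (Real.pi / 10) * (2:ℝ) ^ ((β - 1) * (j:ℝ))

/-- The translation `c_{j,m} = (2^{j−1} + m·2^{αj}, 0)ᵗ`. -/
def cvec (α : ℝ) (j m : ℕ) : R2 :=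
  vec2 ((2:ℝ) ^ ((j:ℝ) - 1) + (m:ℝ) * (2:ℝ) ^ (α * (j:ℝ))) 0

/-- The base set `Q = (−ε, 1+ε) × (−1−ε, 1+ε)`. -/
def baseQ (ε : ℝ) : Set R2 :=
  {x : R2 | x 0 ∈ Set.Ioo (-ε) (1+ε) ∧ x 1 ∈ Set.Ioo (-1-ε) (1+ε)}

/-- `m_j^max = ⌈2^{(1−α)j−1}⌉`. -/
def mjmax (α : ℝ) (j : ℕ) : ℤ := ⌈(2:ℝ) ^ ((1-α) * (j:ℝ) - 1)⌉

/-- `ℓ_j^max = ⌈N·2^{(1−β)j}⌉`, with `N = 10`. -/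
def ljmax (β : ℝ) (j : ℕ) : ℤ := ⌈(10:ℝ) * (2:ℝ) ^ ((1-β) * (j:ℝ))⌉

/-- Membership of a triple `(j,m,ℓ)` in the index set
`I₀ = {(j,m,ℓ) ∈ ℕ × ℕ₀ × ℕ₀ : m ≤ m_j^max, ℓ ≤ ℓ_j^max}` (with `ℕ = {1,2,…}`). -/
def memI0 (α β : ℝ) (i : ℕ × ℕ × ℕ) : Prop :=
  1 ≤ i.1 ∧ (i.2.1 : ℤ) ≤ mjmax α i.1 ∧ (i.2.2 : ℤ) ≤ ljmax β i.1

/-- The set `Q_{j,m,ℓ} = R_{j,ℓ}(A_j·Q + c_{j,m})`. -/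
def Qset (α β ε : ℝ) (j m ℓ : ℕ) : Set R2 :=
  (fun x => mulV (Rmat (Theta β j ℓ)) (mulV (Amat α β j) x + cvec α j m)) '' baseQ ε

/-- The index set `I = {0} ∪ I₀`: `none` plays the role of the index `0`. -/
abbrev Idx : Type := Option (ℕ × ℕ × ℕ)

/-- Membership in `I = {0} ∪ I₀`. -/
def memI (α β : ℝ) : Idx → Prop
  | none => True
  | some i => memI0 α β i

/-- The family `(Q_i)_{i ∈ I}`, where `Q₀ = B₄(0)` is the open Euclidean ball of
radius `4` about the origin. -/
def QsetI (α β ε : ℝ) : Idx → Set R2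
  | none => Metric.ball (0:R2) 4
  | some (j, m, ℓ) => Qset α β ε j m ℓ

/-- The weight `w^s` on `I`: `w_i^s = 2^{js}` for `i = (j,m,ℓ) ∈ I₀` and `w₀^s = 1`. -/
def wI (s : ℝ) : Idx → ℝ
  | none => 1
  | some i => (2:ℝ) ^ ((i.1:ℝ) * s)

/-!
Before the rotation, a point of `Q_{j,m,ℓ}` has first coordinate
`2^{j-1} + 2^{αj} q₀ + m 2^{αj}`, where `m 2^{αj} ≤ 2^{j-1} + 2^{αj}` by the bound on `m`, and
second coordinate `2^{βj} q₁`. As `2^{αj}, 2^{βj} ≤ 2^j` and `ε < 1/32`, its norm lies strictly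
between `2^j / 4` and `4 · 2^j`, and the rotation preserves it. Since `Q₀ = B₄(0)`, two
intersecting sets of the covering have scales `j, j'` (with `j = 0` for `Q₀`) such that
`|j - j'| ≤ 3`, whence `2^{js} ≤ 2^{3|s|} 2^{j's}`.
-/

lemma norm_sq_eq_R2 (x : R2) : ‖x‖ ^ 2 = x 0 ^ 2 + x 1 ^ 2 := by
  simp [EuclideanSpace.norm_sq_eq, Fin.sum_univ_two]

lemma mulV_apply_zero (M : Matrix (Fin 2) (Fin 2) ℝ) (x : R2) :
    mulV M x 0 = M 0 0 * x 0 + M 0 1 * x 1 := by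
  simp [mulV]

lemma mulV_apply_one (M : Matrix (Fin 2) (Fin 2) ℝ) (x : R2) :
    mulV M x 1 = M 1 0 * x 0 + M 1 1 * x 1 := by
  simp [mulV]

lemma norm_mulV_Rmat (θ : ℝ) (x : R2) : ‖mulV (Rmat θ) x‖ = ‖x‖ := by
  refine (sq_eq_sq₀ (norm_nonneg _) (norm_nonneg _)).1 ?_
  simp only [norm_sq_eq_R2, mulV_apply_zero, mulV_apply_one, Rmat, Matrix.of_apply,
    Matrix.cons_val', Matrix.cons_val_zero, Matrix.cons_val_one, Matrix.empty_val',
    Matrix.cons_val_fin_one]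
  linear_combination (x 0 ^ 2 + x 1 ^ 2) * sin_sq_add_cos_sq θ

lemma norm_bounds_of_coord_bounds {y : R2} {t : ℝ} (ht : 0 < t) (h₀ : t / 4 < y 0)
    (h₀' : y 0 < 7 / 2 * t) (h₁ : |y 1| < 3 / 2 * t) : t / 4 < ‖y‖ ∧ ‖y‖ < 4 * t := by
  constructor
  · calc t / 4 < |y 0| := h₀.trans_le (le_abs_self _)
      _ ≤ ‖y‖ := by simpa using PiLp.norm_apply_le y 0
  · refine abs_lt_of_sq_lt_sq' ?_ (by positivity) |>.2
    rw [norm_sq_eq_R2]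
    have h₀sq : y 0 ^ 2 < (7 / 2 * t) ^ 2 := pow_lt_pow_left₀ h₀' (by linarith) two_ne_zero
    have h₁sq : y 1 ^ 2 < (3 / 2 * t) ^ 2 := by
      simpa only [sq_abs] using pow_lt_pow_left₀ h₁ (abs_nonneg _) two_ne_zero
    nlinarith

lemma two_rpow_mul_natCast_le_pow {a : ℝ} (ha : a ≤ 1) (j : ℕ) :
    (2 : ℝ) ^ (a * j) ≤ 2 ^ j := by
  rw [← Real.rpow_natCast]
  exact Real.rpow_le_rpow_of_exponent_le one_le_two
    (mul_le_of_le_one_left (Nat.cast_nonneg j) ha)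

lemma two_rpow_natCast_sub_one (j : ℕ) : (2 : ℝ) ^ ((j : ℝ) - 1) = 2 ^ j / 2 := by
  rw [Real.rpow_sub two_pos, Real.rpow_natCast, Real.rpow_one]

lemma natCast_mul_two_rpow_le {α : ℝ} {j m : ℕ} (hm : (m : ℤ) ≤ mjmax α j) :
    m * (2 : ℝ) ^ (α * j) ≤ 2 ^ j / 2 + 2 ^ (α * j) := by
  have hm' : (m : ℝ) < 2 ^ ((1 - α) * j - 1) + 1 := by
    have := (Int.cast_le (R := ℝ)).2 hm
    exact this.trans_lt (Int.ceil_lt_add_one _)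
  have hsplit : (2 : ℝ) ^ ((1 - α) * j - 1) * 2 ^ (α * j) = 2 ^ j / 2 := by
    rw [← Real.rpow_add two_pos, ← two_rpow_natCast_sub_one]
    ring_nf
  nlinarith [Real.rpow_pos_of_pos two_pos (α * j)]

lemma affine_apply_zero (α β : ℝ) (j m : ℕ) (q : R2) :
    (mulV (Amat α β j) q + cvec α j m) 0 =
      2 ^ (α * j) * q 0 + (2 ^ j / 2 + m * 2 ^ (α * j)) := by
  simp [mulV_apply_zero, Amat, cvec, vec2, two_rpow_natCast_sub_one]

lemma affine_apply_one (α β : ℝ) (j m : ℕ) (q : R2) :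
    (mulV (Amat α β j) q + cvec α j m) 1 = 2 ^ (β * j) * q 1 := by
  simp [mulV_apply_one, Amat, cvec, vec2]

lemma norm_bounds_of_mem_Qset {α β ε : ℝ} (hβα : β ≤ α) (hα1 : α ≤ 1)
    (hε : ε ∈ Ioo (0 : ℝ) (1 / 32)) {j m ℓ : ℕ} (hm : (m : ℤ) ≤ mjmax α j) {x : R2}
    (hx : x ∈ Qset α β ε j m ℓ) : (2 : ℝ) ^ j / 4 < ‖x‖ ∧ ‖x‖ < 4 * 2 ^ j := by
  obtain ⟨hε₀, hε₁⟩ := hε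
  obtain ⟨q, ⟨⟨hq₀, hq₀'⟩, ⟨hq₁, hq₁'⟩⟩, rfl⟩ := hx
  rw [norm_mulV_Rmat]
  have ht : (0 : ℝ) < 2 ^ j := by positivity
  have hα := two_rpow_mul_natCast_le_pow hα1 j
  have hβ := two_rpow_mul_natCast_le_pow (hβα.trans hα1) j
  have hαpos := Real.rpow_pos_of_pos two_pos (α * j)
  have hβpos := Real.rpow_pos_of_pos two_pos (β * j)
  have hmα := natCast_mul_two_rpow_le hm
  have hm₀ : (0 : ℝ) ≤ m * 2 ^ (α * j) := by positivity
  apply norm_bounds_of_coord_bounds ht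
  · rw [affine_apply_zero]
    nlinarith [mul_lt_mul_of_pos_left hq₀ hαpos]
  · rw [affine_apply_zero]
    nlinarith [mul_lt_mul_of_pos_left hq₀' hαpos]
  · rw [affine_apply_one, abs_mul, abs_of_pos hβpos]
    have hq₁abs : |q 1| < 1 + ε := abs_lt.2 ⟨by linarith, hq₁'⟩
    nlinarith [mul_lt_mul_of_pos_left hq₁abs hβpos]

def scale : Idx → ℕ
  | none => 0
  | some i => i.1

lemma wI_eq_two_rpow_scale (s : ℝ) (i : Idx) : wI s i = (2 : ℝ) ^ ((scale i : ℝ) * s) := by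
  cases i <;> simp [wI, scale]

lemma norm_lt_of_mem_QsetI {α β ε : ℝ} (hβα : β ≤ α) (hα1 : α ≤ 1)
    (hε : ε ∈ Ioo (0 : ℝ) (1 / 32)) {i : Idx} (hi : memI α β i) {x : R2}
    (hx : x ∈ QsetI α β ε i) : ‖x‖ < 4 * 2 ^ scale i := by
  match i, hi, hx with
  | none, _, hx => simpa [scale, QsetI] using hx
  | some (_, _, _), hi, hx => exact (norm_bounds_of_mem_Qset hβα hα1 hε hi.2.1 hx).2

lemma scale_le_of_mem_inter {α β ε : ℝ} (hβα : β ≤ α) (hα1 : α ≤ 1)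
    (hε : ε ∈ Ioo (0 : ℝ) (1 / 32)) {i i' : Idx} (hi : memI α β i) (hi' : memI α β i')
    {x : R2} (hx : x ∈ QsetI α β ε i) (hx' : x ∈ QsetI α β ε i') :
    scale i ≤ scale i' + 3 := by
  match i, hi, hx with
  | none, _, _ => exact Nat.zero_le _
  | some (j, _, _), hi, hx =>
    have hlower := (norm_bounds_of_mem_Qset hβα hα1 hε hi.2.1 hx).1
    have hupper := norm_lt_of_mem_QsetI hβα hα1 hε hi' hx'
    have hpow : (2 : ℝ) ^ j < 2 ^ (scale i' + 4) := by rw [pow_add]; linarith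
    exact Nat.lt_succ_iff.1 ((pow_lt_pow_iff_right₀ one_lt_two).1 hpow)

lemma rpow_mul_le_rpow_mul_abs_mul {b u v c : ℝ} (hb : 1 ≤ b) (huv : |u - v| ≤ c) (s : ℝ) :
    b ^ (u * s) ≤ b ^ (c * |s|) * b ^ (v * s) := by
  rw [← Real.rpow_add (by linarith)]
  refine Real.rpow_le_rpow_of_exponent_le hb ?_
  have : (u - v) * s ≤ c * |s| :=
    calc (u - v) * s ≤ |u - v| * |s| := by rw [← abs_mul]; exact le_abs_self _
      _ ≤ c * |s| := mul_le_mul_of_nonneg_right huv (abs_nonneg s)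
  linarith

theorem wavePacket_weight_moderate_general (α β ε s : ℝ)
    (hβα : β ≤ α) (hα1 : α ≤ 1) (hε : ε ∈ Set.Ioo (0:ℝ) (1/32))
    (i i' : Idx) (hi : memI α β i) (hi' : memI α β i')
    (h : (QsetI α β ε i ∩ QsetI α β ε i').Nonempty) :
    wI s i ≤ (2:ℝ) ^ (3 * |s|) * wI s i' := by
  obtain ⟨x, hx, hx'⟩ := h
  have hle := scale_le_of_mem_inter hβα hα1 hε hi hi' hx hx'
  have hle' := scale_le_of_mem_inter hβα hα1 hε hi' hi hx' hx
  rw [wI_eq_two_rpow_scale, wI_eq_two_rpow_scale]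
  refine rpow_mul_le_rpow_mul_abs_mul one_le_two (abs_sub_le_iff.2 ⟨?_, ?_⟩) s
  · rw [sub_le_iff_le_add']; exact_mod_cast hle
  · rw [sub_le_iff_le_add']; exact_mod_cast hle'

/-- The weight `w^s` (given by `w_i^s = 2^{js}` for `i = (j,m,ℓ) ∈ I₀`
and `w₀^s = 1`) is `Q^{(α,β)}`-moderate with constant `2^{3|s|}`: if `Q_i ∩ Q_{i'} ≠ ∅`
for `i, i' ∈ I`, then `w_i^s ≤ 2^{3|s|}·w_{i'}^s`. -/
theorem wavePacket_weight_moderate (α β ε s : ℝ)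
    (hβ0 : 0 ≤ β) (hβα : β ≤ α) (hα1 : α ≤ 1) (hε : ε ∈ Set.Ioo (0:ℝ) (1/32))
    (i i' : Idx) (hi : memI α β i) (hi' : memI α β i')
    (h : (QsetI α β ε i ∩ QsetI α β ε i').Nonempty) :
    wI s i ≤ (2:ℝ) ^ (3 * |s|) * wI s i' :=
  wavePacket_weight_moderate_general α β ε s hβα hα1 hε i i' hi hi' h
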